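/- Let M be a matroid on a finite ground set V with independent sets I, and let f be a monotone nondecreasing submodular set function on subsets of V with f(∅) = 0. Consider the matroid greedy chain: S₀ = ∅, and at each step t, if some v with S_{t-1} ∪ {v} ∈ I exists, set S_t = S_{t-1} ∪ {v_t} where v_t maximizes f(S_{t-1} ∪ {v}) over all v such that S_{t-1} ∪ {v} ∈ I; stop when no such element exists, producing the set S (a basis of M). Then 2 f(S) ≥ max{ f(T) : T ∈ I }. -/

import Mathlib

/-!
Let `S = g N` be the greedy basis and `T` independent. Using the exchange axiom, Hall's theorem
assigns to the elements `w ∈ T \ S` pairwise distinct steps `σ w < N` at which `w` was still a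
legal choice. By submodularity and the greedy choice at step `σ w`, the marginal gain of `w` over
`S` is at most the gain `f (g (σ w + 1)) - f (g (σ w))` of that step; summing these distinct
nonnegative gains gives at most `f S`, hence `f T ≤ f (S ∪ T) ≤ f S + f S`.
-/

open Finset

theorem Finset.sum_comp_le_sum_range_of_injective {ι : Type*} [Fintype ι] {σ : ι → ℕ}
    (hσ : Function.Injective σ) {N : ℕ} (hσN : ∀ i, σ i < N) {d : ℕ → ℝ}
    (hd : ∀ n < N, 0 ≤ d n) : ∑ i, d (σ i) ≤ ∑ n ∈ range N, d n := by
  rw [← sum_image fun i _ j _ h => hσ h]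
  exact sum_le_sum_of_subset_of_nonneg (by simpa [subset_iff] using hσN)
    fun n hn _ => hd n (mem_range.1 hn)

section

variable {V : Type*} [DecidableEq V]

theorem sub_le_sum_insert_sub_of_submodular {f : Finset V → ℝ}
    (hsub : ∀ S T : Finset V, S ⊆ T → ∀ v ∉ T,
      f (insert v S) - f S ≥ f (insert v T) - f T)
    (S U : Finset V) : f (S ∪ U) - f S ≤ ∑ u ∈ U, (f (insert u S) - f S) := by
  induction U using Finset.induction_on with
  | empty => simp
  | insert a U haU ih =>
    rw [sum_insert haU, union_insert]
    by_cases haS : a ∈ S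
    · simp only [insert_eq_of_mem (mem_union_left U haS), insert_eq_of_mem haS]
      linarith
    · have := hsub S (S ∪ U) subset_union_left a (by simp [haS, haU])
      linarith

theorem card_le_card_of_forall_not_indep_insert {I : Finset V → Prop}
    (hM3 : ∀ X Y : Finset V, I X → I Y → X.card < Y.card → ∃ y ∈ Y \ X, I (insert y X))
    {X Y : Finset V} (hX : I X) (hY : I Y) (hmax : ∀ y ∈ Y, ¬ I (insert y X)) :
    Y.card ≤ X.card := by
  by_contra! hlt
  obtain ⟨y, hy, hyX⟩ := hM3 X Y hX hY hlt
  exact hmax y (mem_sdiff.1 hy).1 hyX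

structure IsGreedyChain (I : Finset V → Prop) (f : Finset V → ℝ) (g : ℕ → Finset V) (N : ℕ) :
    Prop where
  zero : g 0 = ∅
  step : ∀ t < N, ∃ v ∉ g t, g (t + 1) = insert v (g t) ∧ I (g (t + 1)) ∧
    ∀ w ∉ g t, I (insert w (g t)) → f (insert w (g t)) ≤ f (g (t + 1))

namespace IsGreedyChain

variable {I : Finset V → Prop} {f : Finset V → ℝ} {g : ℕ → Finset V} {N : ℕ}

theorem subset_succ (hg : IsGreedyChain I f g N) {t : ℕ} (ht : t < N) : g t ⊆ g (t + 1) := by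
  obtain ⟨v, -, hv, -⟩ := hg.step t ht
  exact hv ▸ subset_insert v (g t)

theorem subset_of_le (hg : IsGreedyChain I f g N) {s t : ℕ} (hst : s ≤ t) (ht : t ≤ N) :
    g s ⊆ g t := by
  induction t, hst using Nat.le_induction with
  | base => rfl
  | succ n _ ih => exact (ih (by omega)).trans (hg.subset_succ ht)

theorem card_eq (hg : IsGreedyChain I f g N) {t : ℕ} (ht : t ≤ N) : (g t).card = t := by
  induction t with
  | zero => simp [hg.zero]
  | succ t ih =>
    obtain ⟨v, hv, hgv, -⟩ := hg.step t ht
    rw [hgv, card_insert_of_notMem hv, ih (by omega)]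

theorem indep (hg : IsGreedyChain I f g N) (hM1 : I ∅) {t : ℕ} (ht : t ≤ N) : I (g t) := by
  cases t with
  | zero => exact hg.zero ▸ hM1
  | succ t => exact (hg.step t ht).choose_spec.2.2.1

theorem insert_sub_le_gain (hg : IsGreedyChain I f g N)
    (hsub : ∀ S T : Finset V, S ⊆ T → ∀ v ∉ T,
      f (insert v S) - f S ≥ f (insert v T) - f T)
    {t : ℕ} (ht : t < N) {w : V} (hwN : w ∉ g N) (hw : I (insert w (g t))) :
    f (insert w (g N)) - f (g N) ≤ f (g (t + 1)) - f (g t) := by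
  have hle := hg.subset_of_le ht.le le_rfl
  obtain ⟨-, -, -, -, hgreedy⟩ := hg.step t ht
  have := hsub (g t) (g N) hle w hwN
  have := hgreedy w (fun h => hwN (hle h)) hw
  linarith

theorem exists_injective_indep_insert (hg : IsGreedyChain I f g N) (hM1 : I ∅)
    (hM2 : ∀ X Y : Finset V, X ⊆ Y → I Y → I X)
    (hM3 : ∀ X Y : Finset V, I X → I Y → X.card < Y.card → ∃ y ∈ Y \ X, I (insert y X))
    (hstop : ∀ w ∉ g N, ¬ I (insert w (g N))) {T : Finset V} (hT : I T) :
    ∃ σ : ↥(T \ g N) → ℕ, Function.Injective σ ∧ ∀ w, σ w < N ∧ I (insert (w : V) (g (σ w))) := by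
  classical
  let A : ↥(T \ g N) → Finset ℕ := fun w => (range N).filter fun t => I (insert (w : V) (g t))
  suffices ∃ σ, Function.Injective σ ∧ ∀ w, σ w ∈ A w by simpa [A] using this
  refine (all_card_le_biUnion_card_iff_exists_injective A).1 fun X => ?_
  -- Hall's condition: no element of `X` can be added to `g m` for the first step `m` unavailable
  -- to all of `X`, so `#X ≤ #(g m) = m`, and the steps `0, …, m - 1` are all available to `X`.
  have hNU : N ∉ X.biUnion A := by simp [A]
  have hex : ∃ m, m ∉ X.biUnion A := ⟨N, hNU⟩
  obtain ⟨m, hmU, hmin⟩ : ∃ m, m ∉ X.biUnion A ∧ ∀ i < m, i ∈ X.biUnion A :=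
    ⟨Nat.find hex, Nat.find_spec hex, fun i hi => not_not.1 (Nat.find_min hex hi)⟩
  have hmN : m ≤ N := by
    by_contra! h
    exact hNU (hmin N h)
  calc X.card = (X.map (Function.Embedding.subtype _)).card := (card_map _).symm
    _ ≤ (g m).card := by
      refine card_le_card_of_forall_not_indep_insert hM3 (hg.indep hM1 hmN) (hM2 _ _ ?_ hT) ?_
      · intro v hv
        obtain ⟨w, -, rfl⟩ := mem_map.1 hv
        exact (mem_sdiff.1 w.2).1
      · intro v hv hI
        obtain ⟨w, hwX, rfl⟩ := mem_map.1 hv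
        simp only [mem_biUnion, not_exists, not_and, A, mem_filter, mem_range] at hmU
        obtain hlt | rfl := hmN.lt_or_eq
        · exact hmU w hwX hlt hI
        · exact hstop w (mem_sdiff.1 w.2).2 hI
    _ = m := hg.card_eq hmN
    _ ≤ (X.biUnion A).card := by
      simpa using card_le_card fun i hi => hmin i (mem_range.1 hi)

end IsGreedyChain

end

theorem greedy_matroid_half_bound_general {V : Type*} [DecidableEq V]
    (I : Finset V → Prop)
    (hM1 : I ∅)
    (hM2 : ∀ X Y : Finset V, X ⊆ Y → I Y → I X)
    (hM3 : ∀ X Y : Finset V, I X → I Y → X.card < Y.card →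
      ∃ y ∈ Y \ X, I (insert y X))
    (f : Finset V → ℝ) (hf0 : f ∅ = 0)
    (hmono : ∀ S T : Finset V, S ⊆ T → f S ≤ f T)
    (hsub : ∀ S T : Finset V, S ⊆ T → ∀ v ∉ T,
      f (insert v S) - f S ≥ f (insert v T) - f T)
    (g : ℕ → Finset V) (N : ℕ) (hg0 : g 0 = ∅)
    (hstep : ∀ t < N, ∃ v ∉ g t, g (t + 1) = insert v (g t) ∧ I (g (t + 1)) ∧
      ∀ w ∉ g t, I (insert w (g t)) → f (insert w (g t)) ≤ f (g (t + 1)))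
    (hstop : ∀ w ∉ g N, ¬ I (insert w (g N))) :
    ∀ T : Finset V, I T → f T ≤ 2 * f (g N) := by
  intro T hT
  have hg : IsGreedyChain I f g N := ⟨hg0, hstep⟩
  obtain ⟨σ, hσ, hσN⟩ := hg.exists_injective_indep_insert hM1 hM2 hM3 hstop hT
  have hgain : ∀ t < N, 0 ≤ f (g (t + 1)) - f (g t) := fun t ht =>
    sub_nonneg.2 (hmono _ _ (hg.subset_succ ht))
  calc f T ≤ f (g N ∪ T \ g N) := hmono _ _ (by simp [subset_union_right])
    _ ≤ f (g N) + ∑ w ∈ T \ g N, (f (insert w (g N)) - f (g N)) := by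
      linarith [sub_le_sum_insert_sub_of_submodular hsub (g N) (T \ g N)]
    _ ≤ f (g N) + ∑ w : ↥(T \ g N), (f (g (σ w + 1)) - f (g (σ w))) := by
      rw [← sum_coe_sort]
      gcongr f (g N) + ∑ w, ?_ with w
      exact hg.insert_sub_le_gain hsub (hσN w).1 (mem_sdiff.1 w.2).2 (hσN w).2
    _ ≤ f (g N) + ∑ t ∈ range N, (f (g (t + 1)) - f (g t)) := by
      gcongr
      exact sum_comp_le_sum_range_of_injective hσ (fun w => (hσN w).1) hgain
    _ = 2 * f (g N) := by
      rw [sum_range_sub (fun t => f (g t)), hg0, hf0]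
      ring

/-- Fisher–Nemhauser–Wolsey 1/2-approximation: greedy maximization of a monotone
nondecreasing submodular function over the independent sets of a matroid, run until no
element can be added while preserving independence, achieves at least half the optimum. -/
theorem greedy_matroid_half_bound {V : Type*} [Fintype V] [DecidableEq V]
    (I : Finset V → Prop)
    (hM1 : I ∅)
    (hM2 : ∀ X Y : Finset V, X ⊆ Y → I Y → I X)
    (hM3 : ∀ X Y : Finset V, I X → I Y → X.card < Y.card →
      ∃ y ∈ Y \ X, I (insert y X))
    (f : Finset V → ℝ) (hf0 : f ∅ = 0)
    (hmono : ∀ S T : Finset V, S ⊆ T → f S ≤ f T)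
    (hsub : ∀ S T : Finset V, S ⊆ T → ∀ v ∉ T,
      f (insert v S) - f S ≥ f (insert v T) - f T)
    (g : ℕ → Finset V) (N : ℕ) (hg0 : g 0 = ∅)
    (hstep : ∀ t < N, ∃ v ∉ g t, g (t + 1) = insert v (g t) ∧ I (g (t + 1)) ∧
      ∀ w ∉ g t, I (insert w (g t)) → f (insert w (g t)) ≤ f (g (t + 1)))
    (hstop : ∀ w ∉ g N, ¬ I (insert w (g N))) :
    ∀ T : Finset V, I T → f T ≤ 2 * f (g N) :=
  greedy_matroid_half_bound_general I hM1 hM2 hM3 f hf0 hmono hsub g N hg0 hstep hstop
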